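/- arXiv:1501.06079 — 5 statements merged into one kernel-verified Lean document; each statement's English description precedes it below -/
import Mathlib

section
/- Let (M,g) be a compact Riemannian manifold with Ric_X := Ric + (1/2) L_X g ≥ ε(n-1) g and Ric ≤ (n-1) g for ε > 0. If ε = 1, then Ric = (n-1) g (M is Einstein) and X is a Killing field (L_X g = 0). -/
/-!
Subtracting `Ric ≤ (n - 1) g` from `Ric + ½ L_X g ≥ (n - 1) g` shows that `L_X g` is positive
semidefinite at every point. Its trace is therefore a nonnegative continuous function with
integral zero (divergence theorem), hence vanishes identically, and a positive semidefinite
matrix with zero trace is zero. Once `L_X g = 0`, the two pinching bounds squeeze `Ric` to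
`(n - 1) g`.
-/

open MeasureTheory Matrix
open scoped MatrixOrder

theorem Continuous.eq_zero_of_nonneg_of_integral_eq_zero {X : Type*} [TopologicalSpace X]
    [MeasurableSpace X] {μ : Measure X} [μ.IsOpenPosMeasure] {f : X → ℝ} (hf : Continuous f)
    (hf_nonneg : 0 ≤ f) (hfi : Integrable f μ) (h : ∫ x, f x ∂μ = 0) : f = 0 :=
  (hf.ae_eq_iff_eq μ continuous_const).mp ((integral_eq_zero_iff_of_nonneg hf_nonneg hfi).mp h)

namespace Matrix

variable {ι : Type*} [Fintype ι]

lemma sum_sum_mul_mul_eq_dotProduct_mulVec (A : Matrix ι ι ℝ) (u : ι → ℝ) :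
    ∑ i, ∑ j, u i * u j * A i j = u ⬝ᵥ (A *ᵥ u) := by
  simp only [dotProduct, mulVec, Finset.mul_sum]
  exact Finset.sum_congr rfl fun i _ => Finset.sum_congr rfl fun j _ => by ring

lemma dotProduct_self_eq_sum_sq (u : ι → ℝ) : u ⬝ᵥ u = ∑ i, u i ^ 2 := by
  simp only [dotProduct, sq]

lemma posSemidef_of_forall_dotProduct_self_eq_one {A : Matrix ι ι ℝ} (hA : A.IsSymm)
    (h : ∀ u, u ⬝ᵥ u = 1 → 0 ≤ u ⬝ᵥ (A *ᵥ u)) : A.PosSemidef := by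
  refine .of_dotProduct_mulVec_nonneg (isHermitian_iff_isSymm.mpr hA) fun x => ?_
  rw [star_trivial]
  rcases eq_or_ne x 0 with rfl | hx
  · simp
  have hx0 : 0 < x ⬝ᵥ x :=
    (dotProduct_self_star_nonneg x).lt_of_ne' (mt dotProduct_self_eq_zero.mp hx)
  set r := √(x ⬝ᵥ x)
  have hunit : (r⁻¹ • x) ⬝ᵥ (r⁻¹ • x) = 1 := by
    rw [smul_dotProduct, dotProduct_smul, smul_eq_mul, smul_eq_mul, ← mul_assoc, ← mul_inv,
      Real.mul_self_sqrt hx0.le, inv_mul_cancel₀ hx0.ne']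
  have := h _ hunit
  rw [mulVec_smul, smul_dotProduct, dotProduct_smul, smul_eq_mul, smul_eq_mul] at this
  exact nonneg_of_mul_nonneg_right (nonneg_of_mul_nonneg_right this (by positivity))
    (by positivity)

lemma le_of_forall_dotProduct_self_eq_one {A B : Matrix ι ι ℝ} (hA : A.IsSymm) (hB : B.IsSymm)
    (h : ∀ u, u ⬝ᵥ u = 1 → u ⬝ᵥ (A *ᵥ u) ≤ u ⬝ᵥ (B *ᵥ u)) : A ≤ B :=
  posSemidef_of_forall_dotProduct_self_eq_one (hB.sub hA) fun u hu => by
    rw [sub_mulVec, dotProduct_sub]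
    exact sub_nonneg.mpr (h u hu)

lemma dotProduct_smul_one_mulVec [DecidableEq ι] (c : ℝ) (u : ι → ℝ) :
    u ⬝ᵥ ((c • 1 : Matrix ι ι ℝ) *ᵥ u) = c * (u ⬝ᵥ u) := by
  rw [smul_mulVec, one_mulVec, dotProduct_smul, smul_eq_mul]

end Matrix

theorem stmt_1_general {M : Type*} [TopologicalSpace M] [MeasurableSpace M]
    (n : ℕ)
    (vol : Measure M) [vol.IsOpenPosMeasure]
    (Ric LXg : M → Matrix (Fin n) (Fin n) ℝ)
    (hRicSymm : ∀ p, (Ric p).IsSymm) (hLXgSymm : ∀ p, (LXg p).IsSymm)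
    (hLXgCont : Continuous LXg)
    (hLXgInt : Integrable (fun p => (LXg p).trace) vol)
    (hdiv : ∫ p, (LXg p).trace ∂vol = 0)
    (hlower : ∀ p (u : Fin n → ℝ), ∑ i, u i ^ 2 = 1 →
      1 * ((n : ℝ) - 1) ≤ ∑ i, ∑ j, u i * u j * (Ric p i j + (1 / 2) * LXg p i j))
    (hupper : ∀ p (u : Fin n → ℝ), ∑ i, u i ^ 2 = 1 →
      (∑ i, ∑ j, u i * u j * Ric p i j) ≤ (n : ℝ) - 1) :
    (∀ p, Ric p = ((n : ℝ) - 1) • (1 : Matrix (Fin n) (Fin n) ℝ)) ∧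
      (∀ p, LXg p = 0) := by
  have lower : ∀ p u, u ⬝ᵥ u = 1 →
      (n : ℝ) - 1 ≤ u ⬝ᵥ (Ric p *ᵥ u) + (1 / 2) * u ⬝ᵥ (LXg p *ᵥ u) := fun p u hu => by
    calc (n : ℝ) - 1 ≤ _ := by simpa using hlower p u (by rwa [← dotProduct_self_eq_sum_sq])
      _ = u ⬝ᵥ ((Ric p + (1 / 2 : ℝ) • LXg p) *ᵥ u) := sum_sum_mul_mul_eq_dotProduct_mulVec _ u
      _ = _ := by rw [add_mulVec, smul_mulVec, dotProduct_add, dotProduct_smul, smul_eq_mul]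
  have upper : ∀ p u, u ⬝ᵥ u = 1 → u ⬝ᵥ (Ric p *ᵥ u) ≤ (n : ℝ) - 1 := fun p u hu => by
    rw [← sum_sum_mul_mul_eq_dotProduct_mulVec]
    exact hupper p u (by rwa [← dotProduct_self_eq_sum_sq])
  have hLXg_psd : ∀ p, (LXg p).PosSemidef := fun p =>
    posSemidef_of_forall_dotProduct_self_eq_one (hLXgSymm p) fun u hu => by
      linarith [lower p u hu, upper p u hu]
  have htrace : (fun p => (LXg p).trace) = 0 :=
    hLXgCont.matrix_trace.eq_zero_of_nonneg_of_integral_eq_zero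
      (fun p => (hLXg_psd p).trace_nonneg) hLXgInt hdiv
  have hKilling : ∀ p, LXg p = 0 := fun p =>
    (hLXg_psd p).trace_eq_zero_iff.mp (congrFun htrace p)
  refine ⟨fun p => le_antisymm ?_ ?_, hKilling⟩
  · refine le_of_forall_dotProduct_self_eq_one (hRicSymm p) (isSymm_one.smul _) fun u hu => ?_
    rw [dotProduct_smul_one_mulVec, hu, mul_one]
    exact upper p u hu
  · refine le_of_forall_dotProduct_self_eq_one (isSymm_one.smul _) (hRicSymm p) fun u hu => ?_
    rw [dotProduct_smul_one_mulVec, hu, mul_one]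
    simpa [hKilling p] using lower p u hu

/-- Rigidity in the pinching condition: if a compact Riemannian `n`-manifold
with vector field `X` satisfies `Ric_X = Ric + (1/2) L_X g ≥ ε(n−1) g` and
`Ric ≤ (n−1) g` with `ε = 1`, then `Ric = (n−1) g` (Einstein) and `X` is a
Killing field (`L_X g = 0`).  Setup as in the pinching estimate: tensors in
a continuous orthonormal frame as matrix-valued functions, compactness via a
finite nonzero volume measure that is positive on open sets, and `hdiv` the
divergence theorem `∫_M tr(L_X g) dvol = 0`. -/
theorem stmt_1 {M : Type*} [TopologicalSpace M] [MeasurableSpace M] [BorelSpace M]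
    (n : ℕ) (hn : 2 ≤ n)
    (vol : Measure M) [IsFiniteMeasure vol] (hvol : vol ≠ 0) [vol.IsOpenPosMeasure]
    (Ric LXg : M → Matrix (Fin n) (Fin n) ℝ)
    (hRicSymm : ∀ p, (Ric p).IsSymm) (hLXgSymm : ∀ p, (LXg p).IsSymm)
    (hRicCont : Continuous Ric) (hLXgCont : Continuous LXg)
    (hRicInt : Integrable (fun p => (Ric p).trace) vol)
    (hLXgInt : Integrable (fun p => (LXg p).trace) vol)
    (hdiv : ∫ p, (LXg p).trace ∂vol = 0)
    (hlower : ∀ p (u : Fin n → ℝ), ∑ i, u i ^ 2 = 1 →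
      1 * ((n : ℝ) - 1) ≤ ∑ i, ∑ j, u i * u j * (Ric p i j + (1 / 2) * LXg p i j))
    (hupper : ∀ p (u : Fin n → ℝ), ∑ i, u i ^ 2 = 1 →
      (∑ i, ∑ j, u i * u j * Ric p i j) ≤ (n : ℝ) - 1) :
    (∀ p, Ric p = ((n : ℝ) - 1) • (1 : Matrix (Fin n) (Fin n) ℝ)) ∧
      (∀ p, LXg p = 0) :=
  stmt_1_general n vol Ric LXg hRicSymm hLXgSymm hLXgCont hLXgInt hdiv hlower hupper
end

section
/- Let φ: [0,r] → ℝ (with r ≥ π) be defined by φ(t) = sin(t) for 0 ≤ t ≤ π/2, φ(t) = 1 for π/2 ≤ t ≤ r − π/2, and φ(t) = −sin(t−r) for r − π/2 ≤ t ≤ r. Then for any continuous function k: [0,r] → ℝ with k ≤ n−1 pointwise, if 0 ≤ ∫₀^r ((n−1)(φ')² − φ² k) dt, then ∫₀^r k dt ≤ (n−1)π. -/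
/-!
Since `φ² ≤ 1` and `k ≤ c := n - 1`, pointwise `k ≤ c (1 - φ² + φ'²) - (c φ'² - φ² k)`, so a
nonnegative index form gives `∫ k ≤ c ∫ (1 - φ² + φ'²)`. For the plateau function
`φ² + φ'² = 1` away from the two junction points, so `∫ (1 - φ² + φ'²) = 2 ∫ φ'²`, and `φ'²` is
`cos²` on two quarter periods and `0` in between, giving `2 · (π/4 + π/4) = π`.
-/

open Real Set Filter Topology MeasureTheory

theorem integral_le_mul_integral_of_indexForm_nonneg {a b c : ℝ} (hab : a ≤ b)
    {φ ψ k : ℝ → ℝ} (hφ : ContinuousOn φ (Icc a b)) (hψ : ContinuousOn ψ (Icc a b))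
    (hk : ContinuousOn k (Icc a b)) (hφ_le : ∀ t ∈ Icc a b, φ t ^ 2 ≤ 1)
    (hk_le : ∀ t ∈ Icc a b, k t ≤ c)
    (h : 0 ≤ ∫ t in a..b, (c * ψ t ^ 2 - φ t ^ 2 * k t)) :
    ∫ t in a..b, k t ≤ c * ∫ t in a..b, (1 - φ t ^ 2 + ψ t ^ 2) := by
  have hint : ∀ {f : ℝ → ℝ}, ContinuousOn f (Icc a b) → IntervalIntegrable f volume a b :=
    fun hf => hf.intervalIntegrable_of_Icc hab
  have hpoint : ∀ t ∈ Icc a b,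
      k t ≤ c * (1 - φ t ^ 2 + ψ t ^ 2) - (c * ψ t ^ 2 - φ t ^ 2 * k t) := fun t ht => by
    nlinarith [mul_le_mul_of_nonneg_right (hk_le t ht) (sub_nonneg.2 (hφ_le t ht))]
  have hQ : ContinuousOn (fun t => 1 - φ t ^ 2 + ψ t ^ 2) (Icc a b) := by fun_prop
  have hF : ContinuousOn (fun t => c * ψ t ^ 2 - φ t ^ 2 * k t) (Icc a b) := by fun_prop
  calc ∫ t in a..b, k t
      ≤ ∫ t in a..b, (c * (1 - φ t ^ 2 + ψ t ^ 2) - (c * ψ t ^ 2 - φ t ^ 2 * k t)) :=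
        intervalIntegral.integral_mono_on hab (hint hk)
          (hint ((continuousOn_const.mul hQ).sub hF)) hpoint
    _ = c * (∫ t in a..b, (1 - φ t ^ 2 + ψ t ^ 2))
          - ∫ t in a..b, (c * ψ t ^ 2 - φ t ^ 2 * k t) := by
        rw [intervalIntegral.integral_sub ((hint hQ).const_mul c) (hint hF),
          intervalIntegral.integral_const_mul]
    _ ≤ c * ∫ t in a..b, (1 - φ t ^ 2 + ψ t ^ 2) := sub_le_self _ h

noncomputable def plateau (r t : ℝ) : ℝ :=
  if t ≤ π / 2 then sin t else if t ≤ r - π / 2 then 1 else -sin (t - r)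

noncomputable def plateauDeriv (r t : ℝ) : ℝ :=
  if t ≤ π / 2 then cos t else if t ≤ r - π / 2 then 0 else -cos (t - r)

theorem plateau_sq_add_plateauDeriv_sq (r t : ℝ) :
    plateau r t ^ 2 + plateauDeriv r t ^ 2 = 1 := by
  unfold plateau plateauDeriv
  split_ifs <;> simp [sin_sq_add_cos_sq]

theorem continuous_plateau {r : ℝ} (hr : π ≤ r) : Continuous (plateau r) := by
  refine continuous_sin.if_le (continuous_const.if_le (continuous_sin.comp
    (continuous_sub_right r)).neg continuous_id continuous_const ?_) continuous_id
    continuous_const ?_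
  · rintro t rfl
    simp
  · rintro t rfl
    simp [show π / 2 ≤ r - π / 2 by linarith]

theorem continuous_plateauDeriv {r : ℝ} (hr : π ≤ r) : Continuous (plateauDeriv r) := by
  refine continuous_cos.if_le (continuous_const.if_le (continuous_cos.comp
    (continuous_sub_right r)).neg continuous_id continuous_const ?_) continuous_id
    continuous_const ?_
  · rintro t rfl
    simp
  · rintro t rfl
    simp [show π / 2 ≤ r - π / 2 by linarith]

theorem hasDerivAt_plateau {r t : ℝ} (h₁ : t ≠ π / 2) (h₂ : t ≠ r - π / 2) :
    HasDerivAt (plateau r) (plateauDeriv r t) t := by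
  rcases h₁.lt_or_gt with h₁ | h₁
  · have : plateau r =ᶠ[𝓝 t] sin := eventually_of_mem (Iio_mem_nhds h₁) fun s hs => by
      simp [plateau, (mem_Iio.1 hs).le]
    simpa [plateauDeriv, h₁.le] using (hasDerivAt_sin t).congr_of_eventuallyEq this
  rcases h₂.lt_or_gt with h₂ | h₂
  · have : plateau r =ᶠ[𝓝 t] fun _ => 1 :=
      eventually_of_mem (Ioo_mem_nhds h₁ h₂) fun s hs => by
        simp [plateau, hs.2.le, not_le.2 hs.1]
    simpa [plateauDeriv, not_le.2 h₁, h₂.le] using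
      (hasDerivAt_const t (1 : ℝ)).congr_of_eventuallyEq this
  · have : plateau r =ᶠ[𝓝 t] fun s => -sin (s - r) :=
      eventually_of_mem (Ioi_mem_nhds (max_lt h₁ h₂)) fun s hs => by
        obtain ⟨hs₁, hs₂⟩ := max_lt_iff.1 (mem_Ioi.1 hs)
        simp [plateau, not_le.2 hs₁, not_le.2 hs₂]
    simpa [plateauDeriv, not_le.2 h₁, not_le.2 h₂] using
      ((hasDerivAt_sin (t - r)).comp t ((hasDerivAt_id t).sub_const r)).neg.congr_of_eventuallyEq
        this

theorem deriv_plateau_ae_eq (r : ℝ) : deriv (plateau r) =ᵐ[volume] plateauDeriv r := by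
  have : ∀ᵐ t : ℝ, t ∉ ({π / 2, r - π / 2} : Set ℝ) :=
    ((Set.toFinite _).countable).ae_notMem volume
  filter_upwards [this] with t ht
  simp only [mem_insert_iff, mem_singleton_iff, not_or] at ht
  exact (hasDerivAt_plateau ht.1 ht.2).deriv

theorem integral_plateauDeriv_sq {r : ℝ} (hr : π ≤ r) :
    ∫ t in (0 : ℝ)..r, plateauDeriv r t ^ 2 = π / 2 := by
  have hint : ∀ a b, IntervalIntegrable (fun t => plateauDeriv r t ^ 2) volume a b :=
    fun a b => ((continuous_plateauDeriv hr).pow 2).intervalIntegrable a b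
  have hmid : π / 2 ≤ r - π / 2 := by linarith
  have hleft : ∫ t in (0 : ℝ)..π / 2, plateauDeriv r t ^ 2 = ∫ t in (0 : ℝ)..π / 2, cos t ^ 2 :=
    intervalIntegral.integral_congr_uIoo fun t ht => by
      rw [uIoo_of_le (by positivity)] at ht
      simp [plateauDeriv, ht.2.le]
  have hcenter :
      ∫ t in π / 2..r - π / 2, plateauDeriv r t ^ 2 = ∫ _ in π / 2..r - π / 2, (0 : ℝ) :=
    intervalIntegral.integral_congr_uIoo fun t ht => by
      rw [uIoo_of_le hmid] at ht
      simp [plateauDeriv, not_le.2 ht.1, ht.2.le]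
  have hright : ∫ t in r - π / 2..r, plateauDeriv r t ^ 2
      = ∫ t in r - π / 2..r, cos (t - r) ^ 2 :=
    intervalIntegral.integral_congr_uIoo fun t ht => by
      rw [uIoo_of_le (by linarith [pi_pos])] at ht
      simp [plateauDeriv, not_le.2 (hmid.trans_lt ht.1), not_le.2 ht.1]
  rw [← intervalIntegral.integral_add_adjacent_intervals (hint 0 (r - π / 2)) (hint _ r),
    ← intervalIntegral.integral_add_adjacent_intervals (hint 0 (π / 2)) (hint _ (r - π / 2)),
    hleft, hcenter, hright, intervalIntegral.integral_comp_sub_right (fun t => cos t ^ 2),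
    integral_cos_sq, integral_cos_sq]
  simp

theorem stmt_2_general (n : ℕ) (r : ℝ) (hr : Real.pi ≤ r)
    (φ : ℝ → ℝ)
    (hφ : ∀ t, φ t = if t ≤ Real.pi / 2 then Real.sin t
      else if t ≤ r - Real.pi / 2 then 1 else -Real.sin (t - r))
    (k : ℝ → ℝ) (hk_cont : ContinuousOn k (Set.Icc 0 r))
    (hk_le : ∀ t ∈ Set.Icc (0 : ℝ) r, k t ≤ (n : ℝ) - 1)
    (hpos : 0 ≤ ∫ t in (0 : ℝ)..r, (((n : ℝ) - 1) * (deriv φ t) ^ 2 - (φ t) ^ 2 * k t)) :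
    (∫ t in (0 : ℝ)..r, k t) ≤ ((n : ℝ) - 1) * Real.pi := by
  obtain rfl : φ = plateau r := funext hφ
  rw [intervalIntegral.integral_congr_ae ((deriv_plateau_ae_eq r).mono fun t ht _ => by
    rw [ht])] at hpos
  have hsum (t : ℝ) :
      1 - plateau r t ^ 2 + plateauDeriv r t ^ 2 = 2 * plateauDeriv r t ^ 2 := by
    linarith [plateau_sq_add_plateauDeriv_sq r t]
  calc ∫ t in (0 : ℝ)..r, k t
      ≤ (n - 1) * ∫ t in (0 : ℝ)..r, (1 - plateau r t ^ 2 + plateauDeriv r t ^ 2) :=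
        integral_le_mul_integral_of_indexForm_nonneg (by linarith [pi_pos])
          (continuous_plateau hr).continuousOn (continuous_plateauDeriv hr).continuousOn hk_cont
          (fun t _ => by nlinarith [plateau_sq_add_plateauDeriv_sq r t]) hk_le hpos
    _ = (n - 1) * π := by
        simp only [hsum, intervalIntegral.integral_const_mul, integral_plateauDeriv_sq hr]
        ring

/-- The elementary integral estimate underlying the second variation estimate
(Lemma 2.1): with the standard test function `φ` (equal to `sin t` near `0`,
`1` in the middle, `-sin (t - r)` near `r`), any continuous `k ≤ n - 1` with
nonnegative "index form" `∫ ((n-1) φ'² - φ² k) ≥ 0` satisfies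
`∫ k ≤ (n-1) π`. -/
theorem stmt_2 (n : ℕ) (hn : 2 ≤ n) (r : ℝ) (hr : Real.pi ≤ r)
    (φ : ℝ → ℝ)
    (hφ : ∀ t, φ t = if t ≤ Real.pi / 2 then Real.sin t
      else if t ≤ r - Real.pi / 2 then 1 else -Real.sin (t - r))
    (k : ℝ → ℝ) (hk_cont : ContinuousOn k (Set.Icc 0 r))
    (hk_le : ∀ t ∈ Set.Icc (0 : ℝ) r, k t ≤ (n : ℝ) - 1)
    (hpos : 0 ≤ ∫ t in (0 : ℝ)..r, (((n : ℝ) - 1) * (deriv φ t) ^ 2 - (φ t) ^ 2 * k t)) :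
    (∫ t in (0 : ℝ)..r, k t) ≤ ((n : ℝ) - 1) * Real.pi :=
  stmt_2_general n r hr φ hφ k hk_cont hk_le hpos
end

section
/- Let (M,g) be a complete Riemannian manifold with a smooth vector field X satisfying Ric + (1/2) L_X g ≥ ε(n−1) g and Ric ≤ (n−1) g, where ε > 0. Let p, q ∈ M and let γ: [0, d(p,q)] → M be a unit-speed minimal geodesic from p to q. Then g(X(q), γ'(d(p,q))) ≥ −(n−1)π − |X(p)| + (n−1)ε·d(p,q). -/
/-!
Integrating `Ric_X(γ', γ') ≥ ε(n-1)` along `γ` gives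
`g(X(q), γ'(d)) - g(X(p), γ'(0)) ≥ ε(n-1)d - ∫₀^d Ric(γ', γ')`, so it suffices to bound the Ricci
integral by `(n-1)π`. For `d < π` this follows from `Ric ≤ n - 1`. For `d ≥ π` take the test
function `φ` equal to `sin` on the first and last quarter-periods and to `1` in between: then
`φ² + φ'² = 1` and `∫ φ'² = π/2`, so the index form bounds `∫ φ² Ric` by `(n-1)π/2` while
`Ric ≤ n - 1` bounds `∫ φ'² Ric` by `(n-1)π/2`.
-/

open Real intervalIntegral Set

theorem hasDerivAt_sin_min_pi_div_two (t : ℝ) :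
    HasDerivAt (fun s => sin (min s (π / 2))) (cos (min t (π / 2))) t := by
  rcases lt_trichotomy t (π / 2) with ht | rfl | ht
  · rw [min_eq_left ht.le]
    refine (hasDerivAt_sin t).congr_of_eventuallyEq ?_
    filter_upwards [Iio_mem_nhds ht] with s hs
    rw [min_eq_left (le_of_lt hs)]
  · rw [min_self, ← hasDerivWithinAt_univ, ← Iic_union_Ici]
    refine HasDerivWithinAt.union ?_ ?_
    · exact (hasDerivAt_sin _).hasDerivWithinAt.congr (fun s hs => by rw [min_eq_left hs])
        (by rw [min_self])
    · rw [cos_pi_div_two]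
      exact (hasDerivAt_const _ _).hasDerivWithinAt.congr (fun s hs => by rw [min_eq_right hs])
        (by rw [min_self])
  · rw [min_eq_right ht.le, cos_pi_div_two]
    refine (hasDerivAt_const t (sin (π / 2))).congr_of_eventuallyEq ?_
    filter_upwards [Ioi_mem_nhds ht] with s hs
    rw [min_eq_right (le_of_lt hs)]

/-- On `[0, d]` with `π ≤ d`: `sin t` up to `π / 2`, then `1`, then `sin (d - t)` from `d - π / 2`. -/
noncomputable def sinePlateau (d t : ℝ) : ℝ :=
  sin (min t (π / 2)) + sin (min (d - t) (π / 2)) - 1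

noncomputable def sinePlateauDeriv (d t : ℝ) : ℝ :=
  cos (min t (π / 2)) - cos (min (d - t) (π / 2))

section sinePlateau

variable {d : ℝ}

theorem hasDerivAt_sinePlateau (d t : ℝ) :
    HasDerivAt (sinePlateau d) (sinePlateauDeriv d t) t := by
  have hrefl := (hasDerivAt_sin_min_pi_div_two (d - t)).comp t ((hasDerivAt_id t).const_sub d)
  exact (((hasDerivAt_sin_min_pi_div_two t).add hrefl).sub_const 1).congr_deriv
    (by unfold sinePlateauDeriv; ring)

theorem deriv_sinePlateau (d : ℝ) : deriv (sinePlateau d) = sinePlateauDeriv d :=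
  funext fun t => (hasDerivAt_sinePlateau d t).deriv

theorem continuous_sinePlateauDeriv (d : ℝ) : Continuous (sinePlateauDeriv d) := by
  unfold sinePlateauDeriv; fun_prop

theorem sinePlateau_zero (hd : π / 2 ≤ d) : sinePlateau d 0 = 0 := by
  simp [sinePlateau, min_eq_right hd, pi_div_two_pos.le]

theorem sinePlateau_self (hd : π / 2 ≤ d) : sinePlateau d d = 0 := by
  simp [sinePlateau, min_eq_right hd, pi_div_two_pos.le]

theorem min_pi_div_two_eq_or (hd : π ≤ d) (t : ℝ) :
    min t (π / 2) = π / 2 ∨ min (d - t) (π / 2) = π / 2 := by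
  rcases le_total (π / 2) t with ht | ht
  · exact .inl (min_eq_right ht)
  · exact .inr (min_eq_right (by linarith))

theorem sinePlateau_sq_add_sinePlateauDeriv_sq (hd : π ≤ d) (t : ℝ) :
    sinePlateau d t ^ 2 + sinePlateauDeriv d t ^ 2 = 1 := by
  unfold sinePlateau sinePlateauDeriv
  rcases min_pi_div_two_eq_or hd t with h | h <;>
    simp only [h, sin_pi_div_two, cos_pi_div_two] <;>
    linear_combination sin_sq_add_cos_sq _

theorem sinePlateauDeriv_sq (hd : π ≤ d) (t : ℝ) :
    sinePlateauDeriv d t ^ 2 = cos (min t (π / 2)) ^ 2 + cos (min (d - t) (π / 2)) ^ 2 := by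
  unfold sinePlateauDeriv
  rcases min_pi_div_two_eq_or hd t with h | h <;> simp only [h, cos_pi_div_two] <;> ring

theorem integral_cos_min_pi_div_two_sq (hd : π / 2 ≤ d) :
    ∫ t in (0 : ℝ)..d, cos (min t (π / 2)) ^ 2 = π / 4 := by
  have hint : ∀ a b : ℝ, IntervalIntegrable (fun t => cos (min t (π / 2)) ^ 2) MeasureTheory.volume a b :=
    fun a b => (by fun_prop : Continuous fun t : ℝ => cos (min t (π / 2)) ^ 2).intervalIntegrable a b
  have hleft : ∫ t in (0 : ℝ)..π / 2, cos (min t (π / 2)) ^ 2 = π / 4 := by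
    rw [integral_congr (g := fun t => cos t ^ 2) fun t ht => by
      rw [uIcc_of_le pi_div_two_pos.le] at ht; simp only [min_eq_left ht.2], integral_cos_sq]
    simp only [cos_pi_div_two, cos_zero, sin_zero]; ring
  have hright : ∫ t in π / 2..d, cos (min t (π / 2)) ^ 2 = 0 := by
    rw [integral_congr (g := fun _ => 0) fun t ht => by
      rw [uIcc_of_le hd] at ht; simp [min_eq_right ht.1, cos_pi_div_two]]
    simp
  rw [← integral_add_adjacent_intervals (hint 0 (π / 2)) (hint _ d), hleft, hright, add_zero]

theorem integral_sinePlateauDeriv_sq (hd : π ≤ d) :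
    ∫ t in (0 : ℝ)..d, sinePlateauDeriv d t ^ 2 = π / 2 := by
  have hd' : π / 2 ≤ d := by linarith [pi_pos]
  have hcont : Continuous fun t : ℝ => cos (min t (π / 2)) ^ 2 := by fun_prop
  simp_rw [sinePlateauDeriv_sq hd]
  have hrefl : Continuous fun t : ℝ => cos (min (d - t) (π / 2)) ^ 2 := by fun_prop
  rw [integral_add (hcont.intervalIntegrable _ _) (hrefl.intervalIntegrable _ _)]
  rw [integral_comp_sub_left (fun t => cos (min t (π / 2)) ^ 2), sub_self, sub_zero,
    integral_cos_min_pi_div_two_sq hd']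
  ring

end sinePlateau

section RicciIntegral

variable {d K : ℝ} {ric : ℝ → ℝ}

theorem integral_le_mul_pi_of_index_form_nonneg (hd : π ≤ d)
    (hric : ContinuousOn ric (Icc 0 d)) (hle : ∀ t ∈ Icc 0 d, ric t ≤ K)
    (hindex : ∀ φ : ℝ → ℝ, φ 0 = 0 → φ d = 0 →
      (∀ t, DifferentiableAt ℝ φ t) → Continuous (deriv φ) →
      0 ≤ ∫ t in (0 : ℝ)..d, (K * (deriv φ t) ^ 2 - (φ t) ^ 2 * ric t)) :
    ∫ t in (0 : ℝ)..d, ric t ≤ K * π := by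
  set φ := sinePlateau d
  set ψ := sinePlateauDeriv d
  have hd₀ : 0 ≤ d := by linarith [pi_pos]
  have hd' : π / 2 ≤ d := by linarith [pi_pos]
  have hψ : Continuous ψ := continuous_sinePlateauDeriv d
  have hφ : Continuous φ := continuous_iff_continuousAt.2 fun t =>
    (hasDerivAt_sinePlateau d t).continuousAt
  have hIcc : uIcc 0 d = Icc 0 d := uIcc_of_le hd₀
  have hφric : IntervalIntegrable (fun t => φ t ^ 2 * ric t) MeasureTheory.volume 0 d :=
    ((hφ.pow 2).continuousOn.mul hric).intervalIntegrable_of_Icc hd₀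
  have hψric : IntervalIntegrable (fun t => ψ t ^ 2 * ric t) MeasureTheory.volume 0 d :=
    ((hψ.pow 2).continuousOn.mul hric).intervalIntegrable_of_Icc hd₀
  have hψsq : IntervalIntegrable (fun t => ψ t ^ 2) MeasureTheory.volume 0 d :=
    (hψ.pow 2).intervalIntegrable 0 d
  have hφ_index : ∫ t in (0 : ℝ)..d, φ t ^ 2 * ric t ≤ K * (π / 2) := by
    have h := hindex φ (sinePlateau_zero hd') (sinePlateau_self hd')
      (fun t => (hasDerivAt_sinePlateau d t).differentiableAt)
      (by rw [deriv_sinePlateau]; exact hψ)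
    rw [deriv_sinePlateau, integral_sub (hψsq.const_mul K) hφric, integral_const_mul,
      integral_sinePlateauDeriv_sq hd] at h
    linarith
  have hψ_bound : ∫ t in (0 : ℝ)..d, ψ t ^ 2 * ric t ≤ K * (π / 2) := by
    calc ∫ t in (0 : ℝ)..d, ψ t ^ 2 * ric t ≤ ∫ t in (0 : ℝ)..d, K * ψ t ^ 2 :=
          integral_mono_on hd₀ hψric (hψsq.const_mul K) fun t ht => by
            nlinarith [hle t ht, sq_nonneg (ψ t)]
      _ = K * (π / 2) := by rw [integral_const_mul, integral_sinePlateauDeriv_sq hd]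
  calc ∫ t in (0 : ℝ)..d, ric t
      = ∫ t in (0 : ℝ)..d, (φ t ^ 2 * ric t + ψ t ^ 2 * ric t) :=
        integral_congr fun t _ => by
          linear_combination (-ric t) * sinePlateau_sq_add_sinePlateauDeriv_sq hd t
    _ = (∫ t in (0 : ℝ)..d, φ t ^ 2 * ric t) + ∫ t in (0 : ℝ)..d, ψ t ^ 2 * ric t :=
        integral_add hφric hψric
    _ ≤ K * (π / 2) + K * (π / 2) := add_le_add hφ_index hψ_bound
    _ = K * π := by ring

theorem integral_le_mul_pi (hK : 0 ≤ K) (hd : 0 ≤ d)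
    (hric : ContinuousOn ric (Icc 0 d)) (hle : ∀ t ∈ Icc 0 d, ric t ≤ K)
    (hindex : ∀ φ : ℝ → ℝ, φ 0 = 0 → φ d = 0 →
      (∀ t, DifferentiableAt ℝ φ t) → Continuous (deriv φ) →
      0 ≤ ∫ t in (0 : ℝ)..d, (K * (deriv φ t) ^ 2 - (φ t) ^ 2 * ric t)) :
    ∫ t in (0 : ℝ)..d, ric t ≤ K * π := by
  rcases le_total π d with hπ | hπ
  · exact integral_le_mul_pi_of_index_form_nonneg hπ hric hle hindex
  calc ∫ t in (0 : ℝ)..d, ric t ≤ ∫ t in (0 : ℝ)..d, K :=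
        integral_mono_on hd (hric.intervalIntegrable_of_Icc hd) intervalIntegrable_const hle
    _ = K * d := by rw [integral_const, smul_eq_mul, sub_zero, mul_comm]
    _ ≤ K * π := mul_le_mul_of_nonneg_left hπ hK

end RicciIntegral

theorem stmt_4_general (n : ℕ) (hn : 2 ≤ n) (ε : ℝ)
    (d : ℝ) (hd : 0 < d)  -- d = d(p,q)
    (ric xg : ℝ → ℝ) (normXp : ℝ)
    (hCS : |xg 0| ≤ normXp)
    (hric_cont : ContinuousOn ric (Set.Icc 0 d))
    (hxg_deriv : ∀ t, HasDerivAt xg (deriv xg t) t)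
    (hxg_deriv_cont : Continuous (deriv xg))
    (hRicX : ∀ t ∈ Set.Icc (0 : ℝ) d, ε * ((n : ℝ) - 1) ≤ ric t + deriv xg t)
    (hRic_le : ∀ t ∈ Set.Icc (0 : ℝ) d, ric t ≤ (n : ℝ) - 1)
    (hminimal : ∀ φ : ℝ → ℝ, φ 0 = 0 → φ d = 0 →
      (∀ t, DifferentiableAt ℝ φ t) → Continuous (deriv φ) →
      0 ≤ ∫ t in (0 : ℝ)..d, (((n : ℝ) - 1) * (deriv φ t) ^ 2 - (φ t) ^ 2 * ric t)) :
    -((n : ℝ) - 1) * Real.pi - normXp + ((n : ℝ) - 1) * ε * d ≤ xg d := by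
  have hn₁ : (0 : ℝ) ≤ (n : ℝ) - 1 := by
    have : (2 : ℝ) ≤ n := by exact_mod_cast hn
    linarith
  have hricI : IntervalIntegrable ric MeasureTheory.volume 0 d :=
    hric_cont.intervalIntegrable_of_Icc hd.le
  have hxg'I : IntervalIntegrable (deriv xg) MeasureTheory.volume 0 d :=
    hxg_deriv_cont.intervalIntegrable 0 d
  have hric_int := integral_le_mul_pi hn₁ hd.le hric_cont hRic_le hminimal
  have hxg_growth : ε * ((n : ℝ) - 1) * d - ∫ t in (0 : ℝ)..d, ric t ≤ xg d - xg 0 := by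
    calc ε * ((n : ℝ) - 1) * d - ∫ t in (0 : ℝ)..d, ric t
        = ∫ t in (0 : ℝ)..d, (ε * ((n : ℝ) - 1) - ric t) := by
          rw [integral_sub intervalIntegrable_const hricI, integral_const, smul_eq_mul,
            sub_zero, mul_comm]
      _ ≤ ∫ t in (0 : ℝ)..d, deriv xg t :=
          integral_mono_on hd.le (intervalIntegrable_const.sub hricI) hxg'I fun t ht => by
            linarith [hRicX t ht]
      _ = xg d - xg 0 := integral_eq_sub_of_hasDerivAt (fun t _ => hxg_deriv t) hxg'I
  linarith [neg_abs_le (xg 0)]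

/-- Lemma 2.2 (the fundamental estimate): if `Ric + (1/2) L_X g ≥ ε(n−1) g`
and `Ric ≤ (n−1) g`, and `γ : [0, d(p,q)] → M` is a unit-speed minimal
geodesic from `p` to `q`, then
`g(X(q), γ'(d(p,q))) ≥ −(n−1)π − |X(p)| + (n−1)ε·d(p,q)`.
Data along `γ`: `ric t = Ric(γ'(t), γ'(t))`, `xg t = g(X(γ(t)), γ'(t))` and
`d = d(p,q)`; `normXp = |X(p)|`, with `hCS` the Cauchy–Schwarz inequality
`|g(X(p), γ'(0))| ≤ |X(p)|`.  The hypothesis `hRicX` is the lower bound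
`Ric_X(γ',γ') ≥ ε(n−1)`, using the geodesic identity
`(1/2)(L_X g)(γ',γ') = (d/dt) g(X∘γ, γ')`; `hRic_le` is `Ric ≤ (n−1)g`;
`hminimal` records minimality of `γ` via nonnegativity of the index form. -/
theorem stmt_4 (n : ℕ) (hn : 2 ≤ n) (ε : ℝ) (hε : 0 < ε)
    (d : ℝ) (hd : 0 < d)  -- d = d(p,q)
    (ric xg : ℝ → ℝ) (normXp : ℝ)
    (hCS : |xg 0| ≤ normXp)
    (hric_cont : ContinuousOn ric (Set.Icc 0 d))
    (hxg_deriv : ∀ t, HasDerivAt xg (deriv xg t) t)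
    (hxg_deriv_cont : Continuous (deriv xg))
    (hRicX : ∀ t ∈ Set.Icc (0 : ℝ) d, ε * ((n : ℝ) - 1) ≤ ric t + deriv xg t)
    (hRic_le : ∀ t ∈ Set.Icc (0 : ℝ) d, ric t ≤ (n : ℝ) - 1)
    (hminimal : ∀ φ : ℝ → ℝ, φ 0 = 0 → φ d = 0 →
      (∀ t, DifferentiableAt ℝ φ t) → Continuous (deriv φ) →
      0 ≤ ∫ t in (0 : ℝ)..d, (((n : ℝ) - 1) * (deriv φ t) ^ 2 - (φ t) ^ 2 * ric t)) :
    -((n : ℝ) - 1) * Real.pi - normXp + ((n : ℝ) - 1) * ε * d ≤ xg d :=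
  stmt_4_general n hn ε d hd ric xg normXp hCS hric_cont hxg_deriv hxg_deriv_cont hRicX hRic_le
    hminimal
end

section
/- Let (M,g) be a complete noncompact Riemannian manifold with a vector field X satisfying Ric_X ≥ ε(n−1) g (ε>0) and Ric ≤ (n−1) g. Then |X(q)| → ∞ as d(p,q) → ∞ for any fixed base point p. -/
open RealInnerProductSpace

/-!
Let `γ` be a unit-speed minimal geodesic from `p` to `q`, of length `d`. Testing the
nonnegative index form of `γ` with `φ t = (1 - e^{-t}) (1 - e^{t-d})`, which is `1` except on a
set of mass `O(1)` near the endpoints, and using `Ric ≤ n - 1` there, bounds `∫_γ Ric` by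
`6 (n - 1)` independently of `d`. Integrating `Ric_X ≥ ε (n - 1)` along `γ` then gives
`g(X q, γ' d) ≥ g(X p, γ' 0) + ε (n - 1) d - 6 (n - 1)`, and Cauchy–Schwarz at both ends yields
`‖X q‖ ≥ ε (n - 1) d - 6 (n - 1) - ‖X p‖`.
-/

open Real Set MeasureTheory

noncomputable def expBump (d t : ℝ) : ℝ := (1 - exp (-t)) * (1 - exp (t - d))

/-- Summed over a parallel orthonormal frame `E_i` normal to `γ`, the index forms
`I(φ E_i, φ E_i)` equal `∫ ((n - 1) φ'^2 - φ^2 Ric(γ', γ'))`; here `K` stands for `n - 1`. -/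
def IndexFormNonneg (K d : ℝ) (ric : ℝ → ℝ) : Prop :=
  ∀ φ : ℝ → ℝ, φ 0 = 0 → φ d = 0 → (∀ t, DifferentiableAt ℝ φ t) → Continuous (deriv φ) →
    0 ≤ ∫ t in (0 : ℝ)..d, (K * deriv φ t ^ 2 - φ t ^ 2 * ric t)

section ExpBump

variable {d : ℝ}

theorem hasDerivAt_expBump (t : ℝ) : HasDerivAt (expBump d) (exp (-t) - exp (t - d)) t := by
  have hneg : HasDerivAt (fun s => exp (-s)) (-exp (-t)) t := by
    simpa using (hasDerivAt_neg t).exp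
  have hsub : HasDerivAt (fun s => exp (s - d)) (exp (t - d)) t := by
    simpa using ((hasDerivAt_id t).sub_const d).exp
  refine ((hneg.const_sub 1).mul (hsub.const_sub 1)).congr_deriv ?_
  ring

theorem deriv_expBump : deriv (expBump d) = fun t => exp (-t) - exp (t - d) :=
  funext fun t => (hasDerivAt_expBump t).deriv

theorem expBump_zero : expBump d 0 = 0 := by simp [expBump]

theorem expBump_self : expBump d d = 0 := by simp [expBump]

theorem one_sub_expBump_le (t : ℝ) : 1 - expBump d t ≤ exp (-t) + exp (t - d) := by
  unfold expBump
  nlinarith [mul_pos (exp_pos (-t)) (exp_pos (t - d))]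

theorem expBump_mem_Icc {t : ℝ} (ht : t ∈ Icc 0 d) : expBump d t ∈ Icc 0 1 := by
  have ha : exp (-t) ≤ 1 := exp_le_one_iff.mpr (by linarith [ht.1])
  have hb : exp (t - d) ≤ 1 := exp_le_one_iff.mpr (by linarith [ht.2])
  unfold expBump
  constructor <;> nlinarith [exp_pos (-t), exp_pos (t - d)]

theorem sq_deriv_expBump_le {t : ℝ} (ht : t ∈ Icc 0 d) :
    (exp (-t) - exp (t - d)) ^ 2 ≤ exp (-t) + exp (t - d) := by
  have ha : exp (-t) ≤ 1 := exp_le_one_iff.mpr (by linarith [ht.1])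
  have hb : exp (t - d) ≤ 1 := exp_le_one_iff.mpr (by linarith [ht.2])
  nlinarith [exp_pos (-t), exp_pos (t - d)]

theorem le_expBump_sq_mul_add {K r t : ℝ} (hK : 0 ≤ K) (ht : t ∈ Icc 0 d) (hr : r ≤ K) :
    r ≤ expBump d t ^ 2 * r + 2 * K * (exp (-t) + exp (t - d)) := by
  obtain ⟨h0, h1⟩ := expBump_mem_Icc ht
  have hgap : 0 ≤ (1 - expBump d t ^ 2) * (K - r) :=
    mul_nonneg (by nlinarith) (sub_nonneg.mpr hr)
  have hmass : (1 - expBump d t ^ 2) * K ≤ 2 * K * (exp (-t) + exp (t - d)) := by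
    nlinarith [mul_nonneg (mul_nonneg (sub_nonneg.2 h1) (sub_nonneg.2 h1)) hK,
      mul_nonneg hK (sub_nonneg.2 (one_sub_expBump_le (d := d) t))]
  linarith

theorem integral_exp_neg_add_exp_sub_le :
    ∫ t in (0 : ℝ)..d, (exp (-t) + exp (t - d)) ≤ 2 := by
  have hprim : ∀ t ∈ uIcc 0 d,
      HasDerivAt (fun s => exp (s - d) - exp (-s)) (exp (-t) + exp (t - d)) t := by
    intro t _
    have hneg : HasDerivAt (fun s => exp (-s)) (-exp (-t)) t := by
      simpa using (hasDerivAt_neg t).exp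
    have hsub : HasDerivAt (fun s => exp (s - d)) (exp (t - d)) t := by
      simpa using ((hasDerivAt_id t).sub_const d).exp
    exact (hsub.sub hneg).congr_deriv (by ring)
  rw [intervalIntegral.integral_eq_sub_of_hasDerivAt hprim
    ((by fun_prop : Continuous fun t => exp (-t) + exp (t - d)).intervalIntegrable _ _)]
  simp only [sub_self, exp_zero, zero_sub, neg_zero]
  linarith [exp_pos (-d)]

end ExpBump

theorem IndexFormNonneg.integral_le {K d : ℝ} {ric : ℝ → ℝ} (hindex : IndexFormNonneg K d ric)
    (hd : 0 ≤ d) (hK : 0 ≤ K) (hric : Continuous ric) (hle : ∀ t ∈ Icc 0 d, ric t ≤ K) :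
    ∫ t in (0 : ℝ)..d, ric t ≤ 6 * K := by
  have hint (f : ℝ → ℝ) (hf : Continuous f) : IntervalIntegrable f volume 0 d :=
    hf.intervalIntegrable 0 d
  have hbump : Continuous (expBump d) :=
    continuous_iff_continuousAt.mpr fun t => (hasDerivAt_expBump t).continuousAt
  set w : ℝ → ℝ := fun t => exp (-t) + exp (t - d)
  have hindex_bump := hindex (expBump d) expBump_zero expBump_self
    (fun t => (hasDerivAt_expBump t).differentiableAt) (by rw [deriv_expBump]; fun_prop)
  rw [deriv_expBump, intervalIntegral.integral_sub (hint _ (by fun_prop)) (hint _ (by fun_prop)),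
    sub_nonneg] at hindex_bump
  have hbump_ric : ∫ t in (0 : ℝ)..d, expBump d t ^ 2 * ric t ≤ K * ∫ t in (0 : ℝ)..d, w t :=
    calc _ ≤ ∫ t in (0 : ℝ)..d, K * (exp (-t) - exp (t - d)) ^ 2 := hindex_bump
      _ ≤ ∫ t in (0 : ℝ)..d, K * w t :=
          intervalIntegral.integral_mono_on hd (hint _ (by fun_prop)) (hint _ (by fun_prop))
            fun t ht => mul_le_mul_of_nonneg_left (sq_deriv_expBump_le ht) hK
      _ = K * ∫ t in (0 : ℝ)..d, w t := intervalIntegral.integral_const_mul _ _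
  calc ∫ t in (0 : ℝ)..d, ric t
      ≤ ∫ t in (0 : ℝ)..d, (expBump d t ^ 2 * ric t + 2 * K * w t) :=
        intervalIntegral.integral_mono_on hd (hint _ hric) (hint _ (by fun_prop))
          fun t ht => le_expBump_sq_mul_add hK ht (hle t ht)
    _ = (∫ t in (0 : ℝ)..d, expBump d t ^ 2 * ric t) + 2 * K * ∫ t in (0 : ℝ)..d, w t := by
        rw [intervalIntegral.integral_add (hint _ (by fun_prop)) (hint _ (by fun_prop)),
          intervalIntegral.integral_const_mul]
    _ ≤ 3 * K * ∫ t in (0 : ℝ)..d, w t := by linarith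
    _ ≤ 6 * K := by nlinarith [integral_exp_neg_add_exp_sub_le (d := d)]

theorem le_integral_add_sub_of_le_add_deriv {c d : ℝ} {r f : ℝ → ℝ} (hd : 0 ≤ d)
    (hr : Continuous r) (hf : ∀ t, HasDerivAt f (deriv f t) t) (hf' : Continuous (deriv f))
    (hc : ∀ t ∈ Icc 0 d, c ≤ r t + deriv f t) :
    c * d ≤ (∫ t in (0 : ℝ)..d, r t) + (f d - f 0) :=
  calc c * d = ∫ _ in (0 : ℝ)..d, c := by simp [mul_comm]
    _ ≤ ∫ t in (0 : ℝ)..d, (r t + deriv f t) :=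
        intervalIntegral.integral_mono_on hd intervalIntegrable_const
          ((hr.add hf').intervalIntegrable 0 d) hc
    _ = (∫ t in (0 : ℝ)..d, r t) + (f d - f 0) := by
        rw [intervalIntegral.integral_add (hr.intervalIntegrable 0 d) (hf'.intervalIntegrable 0 d),
          intervalIntegral.integral_eq_sub_of_hasDerivAt (fun t _ => hf t)
            (hf'.intervalIntegrable 0 d)]

/-- The Riemannian data is recorded as follows: `T x` is the tangent space at
`x`, `X` the vector field, and for `p q : M`, `Geo p q` is the set of
unit-speed minimal geodesics `γ : [0, d(p,q)] → M` from `p` to `q`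
(nonempty by completeness and Hopf–Rinow).  Along each such `γ`:
`ric γ t = Ric(γ'(t), γ'(t))` and `xg γ t = g(X(γ(t)), γ'(t))`, with
`γ'(0) = startV γ`, `γ'(d(p,q)) = endV γ` unit vectors;
`hricX` is `Ric_X(γ',γ') ≥ ε(n−1)` via the geodesic identity
`(1/2)(L_X g)(γ',γ') = (d/dt) g(X∘γ, γ')`, `hric_le` is `Ric ≤ (n−1)g`,
and `hminimal` records minimality via nonnegativity of the index form. -/
theorem stmt_6 {M : Type*} [MetricSpace M]
    {T : M → Type*} [∀ x, NormedAddCommGroup (T x)] [∀ x, InnerProductSpace ℝ (T x)]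
    (n : ℕ) (hn : 2 ≤ n) (ε : ℝ) (hε : 0 < ε)
    (X : ∀ x : M, T x)
    (Geo : M → M → Type*)
    (geo_ne : ∀ p q : M, Nonempty (Geo p q))
    (startV : ∀ {p q : M}, Geo p q → T p)
    (endV : ∀ {p q : M}, Geo p q → T q)
    (hstart_unit : ∀ {p q : M} (γ : Geo p q), ‖startV γ‖ = 1)
    (hend_unit : ∀ {p q : M} (γ : Geo p q), ‖endV γ‖ = 1)
    (ric xg : ∀ {p q : M}, Geo p q → ℝ → ℝ)
    (hxg0 : ∀ {p q : M} (γ : Geo p q), xg γ 0 = ⟪X p, startV γ⟫)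
    (hxgd : ∀ {p q : M} (γ : Geo p q), xg γ (dist p q) = ⟪X q, endV γ⟫)
    (hric_cont : ∀ {p q : M} (γ : Geo p q), Continuous (ric γ))
    (hxg_deriv : ∀ {p q : M} (γ : Geo p q) (t : ℝ), HasDerivAt (xg γ) (deriv (xg γ) t) t)
    (hxg_deriv_cont : ∀ {p q : M} (γ : Geo p q), Continuous (deriv (xg γ)))
    (hricX : ∀ {p q : M} (γ : Geo p q), ∀ t ∈ Set.Icc (0 : ℝ) (dist p q),
      ε * ((n : ℝ) - 1) ≤ ric γ t + deriv (xg γ) t)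
    (hric_le : ∀ {p q : M} (γ : Geo p q), ∀ t ∈ Set.Icc (0 : ℝ) (dist p q),
      ric γ t ≤ (n : ℝ) - 1)
    (hminimal : ∀ {p q : M} (γ : Geo p q) (φ : ℝ → ℝ), φ 0 = 0 → φ (dist p q) = 0 →
      (∀ t, DifferentiableAt ℝ φ t) → Continuous (deriv φ) →
      0 ≤ ∫ t in (0 : ℝ)..(dist p q),
        (((n : ℝ) - 1) * (deriv φ t) ^ 2 - (φ t) ^ 2 * ric γ t))
    (p : M) :
    ∀ C : ℝ, ∃ R : ℝ, ∀ q : M, R < dist p q → C < ‖X q‖ := by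
  have hK : (0 : ℝ) < n - 1 := by
    have : (2 : ℝ) ≤ n := by exact_mod_cast hn
    linarith
  have hgrowth : ∀ q, ε * (n - 1) * dist p q - 6 * (n - 1) - ‖X p‖ ≤ ‖X q‖ := by
    intro q
    obtain ⟨γ⟩ := geo_ne p q
    have hindex : IndexFormNonneg ((n : ℝ) - 1) (dist p q) (ric γ) := hminimal γ
    have hric_int := hindex.integral_le dist_nonneg hK.le (hric_cont γ) (hric_le γ)
    have hxg := le_integral_add_sub_of_le_add_deriv dist_nonneg (hric_cont γ) (hxg_deriv γ)
      (hxg_deriv_cont γ) (hricX γ)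
    have hstart : -‖X p‖ ≤ xg γ 0 := by
      simpa [hxg0, hstart_unit] using neg_le_of_abs_le (abs_real_inner_le_norm (X p) (startV γ))
    have hend : xg γ (dist p q) ≤ ‖X q‖ := by
      simpa [hxgd, hend_unit] using real_inner_le_norm (X q) (endV γ)
    linarith
  intro C
  refine ⟨(C + ‖X p‖ + 6 * (n - 1)) / (ε * (n - 1)), fun q hq => ?_⟩
  rw [div_lt_iff₀ (by positivity)] at hq
  linarith [hgrowth q]
end

section
/- Let (M,g) be a Riemannian manifold with sec ≤ 1 and γ: [0,r] → M a unit-speed geodesic with r ≥ π. Let E be a unit parallel field along γ perpendicular to γ'. If ∫₀^r sec(γ'(t), E(t)) dt > π, then the second variation of energy of γ in the direction of the proper variation field φE is negative, where φ(t) = sin(t) on [0,π/2], 1 on [π/2,r−π/2], −sin(t−r) on [r−π/2,r]. -/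
/-!
Along the trapezoid profile `m = min (π/2, t, r - t)` the test function is `φ = sin ∘ m`, and off
the two corners of `m` one has `φ'² + φ² = 1`. Hence, as `k ≤ 1` and `φ² ≤ 1`, the integrand
`φ'² - φ² k = φ'² - k + φ'² k` is at most `2 φ'² - k = 2 (1 - φ²) - k`, and
`∫₀^r (1 - φ²) = ∫₀^r cos² m = π/4 + 0 + π/4`. So the second variation is at most `π - ∫₀^r k < 0`.
-/

open MeasureTheory intervalIntegral Set Filter Real

theorem intervalIntegral_deriv_sq_sub_sq_mul_le {φ k : ℝ → ℝ} {a b : ℝ} (hab : a ≤ b)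
    (hφ : ContinuousOn φ (Icc a b)) (hk : ContinuousOn k (Icc a b))
    (hk_le : ∀ t ∈ Icc a b, k t ≤ 1)
    (hunit : ∀ᵐ t, t ∈ Icc a b → deriv φ t ^ 2 + φ t ^ 2 = 1) :
    ∫ t in a..b, (deriv φ t ^ 2 - φ t ^ 2 * k t)
      ≤ 2 * (∫ t in a..b, (1 - φ t ^ 2)) - ∫ t in a..b, k t := by
  have hint {f : ℝ → ℝ} (hf : ContinuousOn f (Icc a b)) : IntervalIntegrable f volume a b :=
    hf.intervalIntegrable_of_Icc hab
  have hunit' : ∀ᵐ t ∂volume.restrict (Icc a b), deriv φ t ^ 2 + φ t ^ 2 = 1 :=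
    (ae_restrict_iff' measurableSet_Icc).2 hunit
  have hk_le' : ∀ᵐ t ∂volume.restrict (Icc a b), k t ≤ 1 :=
    (ae_restrict_iff' measurableSet_Icc).2 (Eventually.of_forall hk_le)
  calc ∫ t in a..b, (deriv φ t ^ 2 - φ t ^ 2 * k t)
      = ∫ t in a..b, (1 - φ t ^ 2 - φ t ^ 2 * k t) := by
        refine integral_congr_ae ?_
        filter_upwards [hunit] with t ht ht'
        have := ht (Ioc_subset_Icc_self (uIoc_of_le hab ▸ ht'))
        linarith
    _ ≤ ∫ t in a..b, (2 * (1 - φ t ^ 2) - k t) := by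
        refine integral_mono_ae_restrict hab (hint (by fun_prop)) (hint (by fun_prop)) ?_
        filter_upwards [hunit', hk_le'] with t ht hkt
        -- the difference is `(1 - φ²) (k - 1)` and `1 - φ² = φ'² ≥ 0`
        nlinarith [sq_nonneg (deriv φ t)]
    _ = 2 * (∫ t in a..b, (1 - φ t ^ 2)) - ∫ t in a..b, k t := by
        rw [integral_sub ((hint (by fun_prop)).const_mul 2) (hint hk),
          intervalIntegral.integral_const_mul]

noncomputable def trapezoid (r t : ℝ) : ℝ := min (min (π / 2) t) (r - t)

namespace trapezoid

variable {r t : ℝ}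

@[fun_prop]
theorem continuous (r : ℝ) : Continuous (trapezoid r) := by
  unfold trapezoid; fun_prop

theorem eq_self (hr : π ≤ r) (ht : t ≤ π / 2) : trapezoid r t = t := by
  rw [trapezoid, min_eq_right ht, min_eq_left (by linarith)]

theorem eq_pi_div_two (ht₁ : π / 2 ≤ t) (ht₂ : t ≤ r - π / 2) :
    trapezoid r t = π / 2 := by
  rw [trapezoid, min_eq_left ht₁, min_eq_left (by linarith)]

theorem eq_sub (hr : π ≤ r) (ht : r - π / 2 ≤ t) : trapezoid r t = r - t := by
  rw [trapezoid, min_eq_right]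
  exact le_min (by linarith) (by linarith)

theorem sin_eq_ite (hr : π ≤ r) (t : ℝ) :
    sin (trapezoid r t) =
      if t ≤ π / 2 then sin t else if t ≤ r - π / 2 then 1 else -sin (t - r) := by
  split_ifs with h₁ h₂
  · rw [eq_self hr h₁]
  · rw [eq_pi_div_two (not_le.1 h₁).le h₂, sin_pi_div_two]
  · rw [eq_sub hr (not_le.1 h₂).le, ← sin_neg, neg_sub]

theorem ae_deriv_sin_sq_add_sin_sq (hr : π ≤ r) :
    ∀ᵐ t, deriv (fun s ↦ sin (trapezoid r s)) t ^ 2 + sin (trapezoid r t) ^ 2 = 1 := by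
  have hcorners : ({π / 2, r - π / 2} : Set ℝ).Countable := (toFinite _).countable
  filter_upwards [hcorners.ae_notMem volume] with t ht
  simp only [mem_insert_iff, mem_singleton_iff, not_or] at ht
  rcases lt_or_gt_of_ne ht.1 with h₁ | h₁
  · have hev : (fun s ↦ sin (trapezoid r s)) =ᶠ[nhds t] sin := by
      filter_upwards [Iio_mem_nhds h₁] with s hs
      rw [eq_self hr hs.le]
    rw [hev.deriv_eq, Real.deriv_sin, eq_self hr h₁.le, cos_sq_add_sin_sq]
  rcases lt_or_gt_of_ne ht.2 with h₂ | h₂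
  · have hev : (fun s ↦ sin (trapezoid r s)) =ᶠ[nhds t] fun _ ↦ 1 := by
      filter_upwards [Ioo_mem_nhds h₁ h₂] with s hs
      rw [eq_pi_div_two hs.1.le hs.2.le, sin_pi_div_two]
    rw [hev.deriv_eq, deriv_const, eq_pi_div_two h₁.le h₂.le, sin_pi_div_two]
    norm_num
  · have hev : (fun s ↦ sin (trapezoid r s)) =ᶠ[nhds t] fun s ↦ sin (r - s) := by
      filter_upwards [Ioi_mem_nhds h₂] with s hs
      rw [eq_sub hr hs.le]
    rw [hev.deriv_eq, ((hasDerivAt_id' t).const_sub r).sin.deriv, eq_sub hr h₂.le]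
    simp only [mul_neg, mul_one, neg_sq, cos_sq_add_sin_sq]

theorem integral_one_sub_sin_sq (hr : π ≤ r) :
    ∫ t in (0 : ℝ)..r, (1 - sin (trapezoid r t) ^ 2) = π / 2 := by
  have hint (a b : ℝ) : IntervalIntegrable (fun t ↦ cos (trapezoid r t) ^ 2) volume a b :=
    (by fun_prop : Continuous fun t ↦ cos (trapezoid r t) ^ 2).intervalIntegrable a b
  have hrise : ∫ t in (0 : ℝ)..π / 2, cos (trapezoid r t) ^ 2 = π / 4 := by
    rw [integral_congr (g := fun t ↦ cos t ^ 2) fun t ht ↦ by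
      rw [uIcc_of_le (by positivity)] at ht; simp only [eq_self hr ht.2]]
    rw [integral_cos_sq, cos_pi_div_two, sin_zero]; ring
  have hflat : ∫ t in π / 2..r - π / 2, cos (trapezoid r t) ^ 2 = 0 := by
    rw [integral_congr (g := fun _ ↦ 0) fun t ht ↦ by
      rw [uIcc_of_le (by linarith)] at ht
      simp only [eq_pi_div_two ht.1 ht.2, cos_pi_div_two]; norm_num]
    exact integral_zero
  have hfall : ∫ t in r - π / 2..r, cos (trapezoid r t) ^ 2 = π / 4 := by
    rw [integral_congr (g := fun t ↦ cos (r - t) ^ 2) fun t ht ↦ by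
      rw [uIcc_of_le (by linarith [pi_pos])] at ht; simp only [eq_sub hr ht.1]]
    rw [integral_comp_sub_left (fun t ↦ cos t ^ 2), sub_self, sub_sub_cancel, integral_cos_sq,
      cos_pi_div_two, sin_zero]
    ring
  simp only [← cos_sq']
  rw [← integral_add_adjacent_intervals (hint _ _) (hint _ _), hfall,
    ← integral_add_adjacent_intervals (hint _ _) (hint _ _), hrise, hflat]
  ring

end trapezoid

/-- Lemma 4.1 (index estimate): along a unit-speed geodesic `γ` of length
`r ≥ π` in a manifold with `sec ≤ 1`, if `E` is a unit parallel field
perpendicular to `γ'` with `∫₀^r sec(γ', E) dt > π`, then the second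
variation of energy in the direction of the proper variation field `φE` is
negative.  Here `k t = sec(γ'(t), E(t))` is the sectional curvature of the
plane spanned by `γ'` and `E` along `γ`, and the second variation of energy
for the variation field `φE` along a geodesic is
`∫₀^r ((φ')² − φ² sec(γ',E)) dt`. -/
theorem stmt_14 (r : ℝ) (hr : Real.pi ≤ r)
    (k : ℝ → ℝ)  -- k t = sec(γ'(t), E(t))
    (hk_cont : ContinuousOn k (Set.Icc 0 r))
    (hk_le : ∀ t ∈ Set.Icc (0 : ℝ) r, k t ≤ 1)  -- sec ≤ 1
    (φ : ℝ → ℝ)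
    (hφ : ∀ t, φ t = if t ≤ Real.pi / 2 then Real.sin t
      else if t ≤ r - Real.pi / 2 then 1 else -Real.sin (t - r))
    (hint : Real.pi < ∫ t in (0 : ℝ)..r, k t) :
    (∫ t in (0 : ℝ)..r, ((deriv φ t) ^ 2 - (φ t) ^ 2 * k t)) < 0 := by
  obtain rfl : φ = fun t ↦ sin (trapezoid r t) :=
    funext fun t ↦ (hφ t).trans (trapezoid.sin_eq_ite hr t).symm
  calc ∫ t in (0 : ℝ)..r, (deriv _ t ^ 2 - sin (trapezoid r t) ^ 2 * k t)
      ≤ 2 * (∫ t in (0 : ℝ)..r, (1 - sin (trapezoid r t) ^ 2)) - ∫ t in (0 : ℝ)..r, k t :=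
        intervalIntegral_deriv_sq_sub_sq_mul_le (by linarith [pi_pos])
          (by fun_prop) hk_cont hk_le
          ((trapezoid.ae_deriv_sin_sq_add_sin_sq hr).mono fun _ h _ ↦ h)
    _ = π - ∫ t in (0 : ℝ)..r, k t := by rw [trapezoid.integral_one_sub_sin_sq hr]; ring
    _ < 0 := by linarith
end
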